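/- Let M be a compact metric space, f a homeomorphism, h : M_f(M) → [0,∞) affine bounded upper semicontinuous with P(φ) = sup{h(μ)+∫φdμ}, and suppose: the set of tangent functionals t_φ = {μ_φ} is a singleton and P(φ) - sup{h(μ)+∫φdμ : μ ergodic, μ ≠ μ_φ} = a > 0. Then for every ψ with ‖φ - ψ‖ < a/2, μ_φ is the unique equilibrium state for ψ, and P(χ) = h(μ_φ) + ∫χ dμ_φ for all χ in the ball of radius a/2 around φ; in particular P is affine on that ball. -/

import Mathlib

open MeasureTheory Filter Topology

/-! Integration against a probability measure is 1-Lipschitz in the potential, hence so is the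
pressure `P`. For `ψ` within `a/2` of `φ`, every ergodic `ν ≠ μ_φ` satisfies
`h ν + ∫ψ dν ≤ P φ - a + ‖φ - ψ‖ ≤ P ψ - a + 2‖φ - ψ‖ < P ψ`, so the supremum over ergodic
measures defining `P ψ` is attained at `μ_φ`. Thus `P = h μ_φ + ∫ · dμ_φ` on the ball, and an
equilibrium state `ν` for `ψ` then satisfies `∫η dν ≤ ∫η dμ_φ` for all small `η`; by scaling and
`η ↦ -η` the two measures have the same integrals, so `ν = μ_φ`. -/

namespace MeasureTheory.ProbabilityMeasure

variable {M : Type*} [MetricSpace M] [MeasurableSpace M] [BorelSpace M]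

lemma eq_of_forall_integral_le {ν μ : ProbabilityMeasure M}
    (hle : ∀ η : C(M, ℝ), ∫ y, η y ∂(ν : Measure M) ≤ ∫ y, η y ∂(μ : Measure M)) : ν = μ := by
  have heq : ∀ η : C(M, ℝ), ∫ y, η y ∂(ν : Measure M) = ∫ y, η y ∂(μ : Measure M) := fun η =>
    le_antisymm (hle η) (by simpa [integral_neg] using hle (-η))
  exact toMeasure_injective <|
    ext_of_forall_integral_eq_of_IsFiniteMeasure fun g => heq g.toContinuousMap

variable [CompactSpace M]

lemma integrable_continuousMap (ν : ProbabilityMeasure M) (χ : C(M, ℝ)) :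
    Integrable χ (ν : Measure M) :=
  (BoundedContinuousFunction.mkOfCompact χ).integrable _

lemma integral_le_integral_add_norm_sub (ν : ProbabilityMeasure M) (χ₁ χ₂ : C(M, ℝ)) :
    ∫ y, χ₁ y ∂(ν : Measure M) ≤ ∫ y, χ₂ y ∂(ν : Measure M) + ‖χ₁ - χ₂‖ := by
  have hpointwise : ∀ y, χ₁ y ≤ χ₂ y + ‖χ₁ - χ₂‖ := fun y => by
    have := (abs_le.1 ((χ₁ - χ₂).norm_coe_le_norm y)).2
    rw [ContinuousMap.sub_apply] at this
    linarith
  calc ∫ y, χ₁ y ∂(ν : Measure M)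
      ≤ ∫ y, (χ₂ y + ‖χ₁ - χ₂‖) ∂(ν : Measure M) :=
        integral_mono (ν.integrable_continuousMap χ₁)
          ((ν.integrable_continuousMap χ₂).add (integrable_const _)) hpointwise
    _ = ∫ y, χ₂ y ∂(ν : Measure M) + ‖χ₁ - χ₂‖ := by
        rw [integral_add (ν.integrable_continuousMap χ₂) (integrable_const _)]
        simp

lemma integral_add_continuousMap (ν : ProbabilityMeasure M) (χ₁ χ₂ : C(M, ℝ)) :
    ∫ y, (χ₁ + χ₂) y ∂(ν : Measure M)
      = ∫ y, χ₁ y ∂(ν : Measure M) + ∫ y, χ₂ y ∂(ν : Measure M) :=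
  integral_add (ν.integrable_continuousMap χ₁) (ν.integrable_continuousMap χ₂)

lemma eq_of_forall_integral_le_of_norm_lt {ν μ : ProbabilityMeasure M} {r : ℝ} (hr : 0 < r)
    (hle : ∀ η : C(M, ℝ), ‖η‖ < r →
      ∫ y, η y ∂(ν : Measure M) ≤ ∫ y, η y ∂(μ : Measure M)) : ν = μ := by
  refine eq_of_forall_integral_le fun η => ?_
  set t : ℝ := r / (‖η‖ + 1)
  have ht : 0 < t := by positivity
  have htη : ‖t • η‖ < r := by
    rw [norm_smul, Real.norm_of_nonneg ht.le, div_mul_eq_mul_div, div_lt_iff₀ (by positivity)]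
    nlinarith
  have hscaled := hle (t • η) htη
  simp only [ContinuousMap.smul_apply, smul_eq_mul, integral_const_mul] at hscaled
  exact le_of_mul_le_mul_left hscaled ht

end MeasureTheory.ProbabilityMeasure

section Pressure

open ProbabilityMeasure

variable {M : Type*} [MetricSpace M] [CompactSpace M] [MeasurableSpace M] [BorelSpace M]
  {S : Set (ProbabilityMeasure M)} {h : ProbabilityMeasure M → ℝ} {P : C(M, ℝ) → ℝ}

lemma le_add_norm_sub_of_isLUB
    (hP : ∀ χ, IsLUB {x : ℝ | ∃ ν ∈ S, x = h ν + ∫ y, χ y ∂(ν : Measure M)} (P χ))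
    (χ₁ χ₂ : C(M, ℝ)) : P χ₁ ≤ P χ₂ + ‖χ₁ - χ₂‖ := by
  refine (hP χ₁).2 ?_
  rintro _ ⟨ν, hν, rfl⟩
  have := (hP χ₂).1 ⟨ν, hν, rfl⟩
  linarith [ν.integral_le_integral_add_norm_sub χ₁ χ₂]

lemma eq_add_integral_of_gap {E : ProbabilityMeasure M → Prop} {μ : ProbabilityMeasure M}
    {φ χ : C(M, ℝ)} {a : ℝ}
    (hP : ∀ χ, IsLUB {x : ℝ | ∃ ν ∈ S, x = h ν + ∫ y, χ y ∂(ν : Measure M)} (P χ))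
    (hPE : IsLUB {x : ℝ | ∃ ν ∈ S, E ν ∧ x = h ν + ∫ y, χ y ∂(ν : Measure M)} (P χ))
    (hμ : μ ∈ S)
    (hgap : ∀ ν ∈ S, E ν → ν ≠ μ → h ν + ∫ y, φ y ∂(ν : Measure M) ≤ P φ - a)
    (hχ : ‖φ - χ‖ < a / 2) :
    P χ = h μ + ∫ y, χ y ∂(μ : Measure M) := by
  have hothers : P φ - a + ‖φ - χ‖ < P χ := by
    linarith [le_add_norm_sub_of_isLUB hP φ χ]
  have hle : P χ ≤ max (P φ - a + ‖φ - χ‖) (h μ + ∫ y, χ y ∂(μ : Measure M)) := by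
    refine hPE.2 ?_
    rintro _ ⟨ν, hν, hE, rfl⟩
    by_cases hνμ : ν = μ
    · exact hνμ ▸ le_max_right _ _
    · refine le_max_of_le_left ?_
      linarith [hgap ν hν hE hνμ, ν.integral_le_integral_add_norm_sub χ φ, norm_sub_rev χ φ]
  refine le_antisymm ?_ ((hP χ).1 ⟨μ, hμ, rfl⟩)
  rcases le_max_iff.1 hle with hle' | hle'
  · exact absurd hle' hothers.not_ge
  · exact hle'

lemma eq_of_equilibrium_of_eventually_eq
    (hP : ∀ χ, IsLUB {x : ℝ | ∃ ν ∈ S, x = h ν + ∫ y, χ y ∂(ν : Measure M)} (P χ))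
    {ψ : C(M, ℝ)} {μ ν : ProbabilityMeasure M}
    (hPμ : ∀ᶠ χ in 𝓝 ψ, P χ = h μ + ∫ y, χ y ∂(μ : Measure M))
    (hν : ν ∈ S) (hνψ : h ν + ∫ y, ψ y ∂(ν : Measure M) = P ψ) : ν = μ := by
  obtain ⟨r, hr, hball⟩ := Metric.eventually_nhds_iff.1 hPμ
  refine eq_of_forall_integral_le_of_norm_lt hr fun η hη => ?_
  have hψη : P (ψ + η) = h μ + ∫ y, (ψ + η) y ∂(μ : Measure M) :=
    hball (by rwa [dist_eq_norm, add_sub_cancel_left])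
  have hνψη := (hP (ψ + η)).1 ⟨ν, hν, rfl⟩
  rw [hψη, ν.integral_add_continuousMap, μ.integral_add_continuousMap] at hνψη
  linarith [hball (dist_self ψ ▸ hr)]

end Pressure

theorem stmt_19_general {M : Type*} [MetricSpace M] [CompactSpace M]
    [MeasurableSpace M] [BorelSpace M]
    (f : M ≃ₜ M)
    (Minv : Set (ProbabilityMeasure M))
    (h : ProbabilityMeasure M → ℝ)
    (P : C(M, ℝ) → ℝ)
    (hP : ∀ χ : C(M, ℝ),
      IsLUB {x : ℝ | ∃ ν ∈ Minv, x = h ν + ∫ y, χ y ∂(ν : Measure M)} (P χ))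
    (hPerg : ∀ χ : C(M, ℝ),
      IsLUB {x : ℝ | ∃ ν ∈ Minv, Ergodic f ν.toMeasure ∧
        x = h ν + ∫ y, χ y ∂(ν : Measure M)} (P χ))
    (φ : C(M, ℝ)) (μφ : ProbabilityMeasure M) (hμφ : μφ ∈ Minv)
    (a : ℝ)
    (hgap : P φ - sSup {x : ℝ | ∃ ν ∈ Minv, Ergodic f ν.toMeasure ∧ ν ≠ μφ ∧
      x = h ν + ∫ y, φ y ∂(ν : Measure M)} = a) :
    ∀ ψ : C(M, ℝ), ‖φ - ψ‖ < a / 2 →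
      ({ν ∈ Minv | h ν + ∫ y, ψ y ∂(ν : Measure M) = P ψ} = {μφ}) ∧
      P ψ = h μφ + ∫ y, ψ y ∂(μφ : Measure M) := by
  intro ψ hψ
  have hgap' : ∀ ν ∈ Minv, Ergodic f ν.toMeasure → ν ≠ μφ →
      h ν + ∫ y, φ y ∂(ν : Measure M) ≤ P φ - a := by
    intro ν hν herg hne
    have hbdd : BddAbove {x : ℝ | ∃ ν ∈ Minv, Ergodic f ν.toMeasure ∧ ν ≠ μφ ∧
        x = h ν + ∫ y, φ y ∂(ν : Measure M)} :=
      ⟨P φ, by rintro _ ⟨ν', hν', herg', -, rfl⟩; exact (hPerg φ).1 ⟨ν', hν', herg', rfl⟩⟩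
    linarith [le_csSup hbdd ⟨ν, hν, herg, hne, rfl⟩]
  have hball : ∀ χ ∈ Metric.ball φ (a / 2), P χ = h μφ + ∫ y, χ y ∂(μφ : Measure M) :=
    fun χ hχ => eq_add_integral_of_gap hP (hPerg χ) hμφ hgap' (mem_ball_iff_norm'.1 hχ)
  have hψball : ψ ∈ Metric.ball φ (a / 2) := mem_ball_iff_norm'.2 hψ
  refine ⟨Set.eq_singleton_iff_unique_mem.2 ⟨⟨hμφ, (hball ψ hψball).symm⟩, ?_⟩, hball ψ hψball⟩
  rintro ν ⟨hν, hνψ⟩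
  exact eq_of_equilibrium_of_eventually_eq hP
    (eventually_of_mem (Metric.isOpen_ball.mem_nhds hψball) hball) hν hνψ

/-- Implication (3) ⇒ (5) of Theorem G in abstract form: if the tangent functionals to
`P` at `φ` form the singleton `{γ_φ}`, with `γ_φ` given by integration against the
invariant measure `μ_φ`, and
`a := P(φ) - sup{ h(μ) + ∫φ dμ : μ ergodic invariant, μ ≠ μ_φ } > 0`,
then for every `ψ` with `‖φ - ψ‖ < a/2`, `μ_φ` is the unique equilibrium state for `ψ`
and `P(ψ) = h(μ_φ) + ∫ψ dμ_φ`; in particular `P` is affine on that ball. -/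
theorem stmt_19 {M : Type*} [MetricSpace M] [CompactSpace M]
    [MeasurableSpace M] [BorelSpace M]
    (f : M ≃ₜ M)
    (Minv : Set (ProbabilityMeasure M))
    (hMinv : Minv = {ν : ProbabilityMeasure M |
      Measure.map f ν.toMeasure = ν.toMeasure})
    (h : ProbabilityMeasure M → ℝ)
    (hpos : ∀ ν ∈ Minv, 0 ≤ h ν)
    (hbdd : ∃ C : ℝ, ∀ ν ∈ Minv, h ν ≤ C)
    (haff : ∀ ν₁ ∈ Minv, ∀ ν₂ ∈ Minv, ∀ ρ ∈ Minv, ∀ a b : ℝ, 0 ≤ a → 0 ≤ b →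
      a + b = 1 →
      ρ.toMeasure = ENNReal.ofReal a • ν₁.toMeasure + ENNReal.ofReal b • ν₂.toMeasure →
      h ρ = a * h ν₁ + b * h ν₂)
    (husc : UpperSemicontinuousOn h Minv)
    (P : C(M, ℝ) → ℝ)
    (hP : ∀ χ : C(M, ℝ),
      IsLUB {x : ℝ | ∃ ν ∈ Minv, x = h ν + ∫ y, χ y ∂(ν : Measure M)} (P χ))
    (hPerg : ∀ χ : C(M, ℝ),
      IsLUB {x : ℝ | ∃ ν ∈ Minv, Ergodic f ν.toMeasure ∧
        x = h ν + ∫ y, χ y ∂(ν : Measure M)} (P χ))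
    (φ : C(M, ℝ)) (μφ : ProbabilityMeasure M) (hμφ : μφ ∈ Minv)
    (γφ : C(M, ℝ) →L[ℝ] ℝ)
    (hγφ : ∀ ψ : C(M, ℝ), γφ ψ = ∫ y, ψ y ∂(μφ : Measure M))
    (hT : {γ : C(M, ℝ) →L[ℝ] ℝ | ∀ ψ : C(M, ℝ), γ ψ ≤ P (φ + ψ) - P φ} = {γφ})
    (a : ℝ) (ha : 0 < a)
    (hgap : P φ - sSup {x : ℝ | ∃ ν ∈ Minv, Ergodic f ν.toMeasure ∧ ν ≠ μφ ∧
      x = h ν + ∫ y, φ y ∂(ν : Measure M)} = a) :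
    ∀ ψ : C(M, ℝ), ‖φ - ψ‖ < a / 2 →
      ({ν ∈ Minv | h ν + ∫ y, ψ y ∂(ν : Measure M) = P ψ} = {μφ}) ∧
      P ψ = h μφ + ∫ y, ψ y ∂(μφ : Measure M) :=
  stmt_19_general f Minv h P hP hPerg φ μφ hμφ a hgap
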